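/- Let X_u and X_v be independent random variables (the model-form-uncertainty parameters and the shared model parameters respectively), and let X̃_ũ be a random variable independent of X_v (an alternative model-form-uncertainty parametrization). Let f(X_u, X_v) and q(X̃_ũ, X_v) be square-integrable real-valued outputs of the two models. Fix ε₁, ε₂ > 0 and assume: (1) E[ |Var(f(X_u,X_v) | X_v) − Var(q(X̃_ũ,X_v) | X_v)| ] < ε₁; (2) |Var(f(X_u,X_v)) − Var(q(X̃_ũ,X_v))| < ε₂; (3) Var(f(X_u,X_v)) = 1, and Var(q(X̃_ũ,X_v)) > 0. Then the grouped total Sobol' indices T_u = E[Var(f(X_u,X_v) | X_v)] / Var(f(X_u,X_v)) and T_ũ = E[Var(q(X̃_ũ,X_v) | X_v)] / Var(q(X̃_ũ,X_v)) satisfy |T_u − T_ũ| < ε₁ + ε₂. -/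

import Mathlib

/-!
By the law of total variance, `0 ≤ E[Var(q | X_v)] ≤ Var q`, so `T_ũ ∈ [0, 1]`. Hence
`|T_u - T_ũ| ≤ |E[Var(f | X_v)] - E[Var(q | X_v)]| + T_ũ |Var q - 1|`, and the two terms are
bounded by `ε₁` and `ε₂` respectively since `Var f = 1`.
-/

open MeasureTheory ProbabilityTheory

/-- The conditional variance of a real random variable `f` given a sub-σ-algebra `m`:
`Var(f | m) = E[f² | m] − (E[f | m])²`. -/
noncomputable def cVar {Ω : Type*} (m : MeasurableSpace Ω) {m0 : MeasurableSpace Ω}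
    (μ : Measure Ω) (f : Ω → ℝ) : Ω → ℝ :=
  fun ω => (μ[fun ω' => f ω' ^ 2 | m]) ω - ((μ[f | m]) ω) ^ 2

theorem abs_sub_div_self_le {b v : ℝ} (hb : 0 ≤ b) (hbv : b ≤ v) : |b - b / v| ≤ |v - 1| := by
  rcases (hb.trans hbv).eq_or_lt with rfl | hv
  · simp [le_antisymm hbv hb]
  have hratio : |b / v| ≤ 1 := by
    rw [abs_of_nonneg (div_nonneg hb hv.le)]
    exact div_le_one_of_le₀ hbv hv.le
  calc |b - b / v| = |b / v| * |v - 1| := by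
        rw [← abs_mul]; congr 1; field_simp
    _ ≤ |v - 1| := mul_le_of_le_one_left (abs_nonneg _) hratio

theorem abs_sub_div_lt_add {a b v ε₁ ε₂ : ℝ} (hab : |a - b| < ε₁) (hv : |1 - v| < ε₂)
    (hb : 0 ≤ b) (hbv : b ≤ v) : |a - b / v| < ε₁ + ε₂ :=
  calc |a - b / v| ≤ |a - b| + |b - b / v| := abs_sub_le a b (b / v)
    _ < ε₁ + ε₂ := by
      refine add_lt_add_of_lt_of_le hab ((abs_sub_div_self_le hb hbv).trans ?_)
      rw [abs_sub_comm]; exact hv.le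

section cVar

variable {Ω : Type*} {m m₀ : MeasurableSpace Ω} {μ : Measure Ω} {X : Ω → ℝ}

theorem cVar_ae_eq_condVar (hm : m ≤ m₀) [IsFiniteMeasure μ] (hX : MemLp X 2 μ) :
    cVar m μ X =ᵐ[μ] Var[X; μ | m] :=
  (condVar_ae_eq_condExp_sq_sub_sq_condExp hm hX).symm

theorem integrable_cVar (hm : m ≤ m₀) [IsFiniteMeasure μ] (hX : MemLp X 2 μ) :
    Integrable (cVar m μ X) μ :=
  integrable_condVar.congr (cVar_ae_eq_condVar hm hX).symm

theorem integral_cVar_nonneg (hm : m ≤ m₀) [IsFiniteMeasure μ] (hX : MemLp X 2 μ) :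
    0 ≤ ∫ ω, cVar m μ X ω ∂μ := by
  rw [integral_congr_ae (cVar_ae_eq_condVar hm hX), condVar, integral_condExp hm]
  exact integral_nonneg fun ω => sq_nonneg _

theorem integral_cVar_add_variance_condExp (hm : m ≤ m₀) [IsProbabilityMeasure μ]
    (hX : MemLp X 2 μ) : ∫ ω, cVar m μ X ω ∂μ + Var[μ[X | m]; μ] = Var[X; μ] := by
  rw [integral_congr_ae (cVar_ae_eq_condVar hm hX)]
  exact integral_condVar_add_variance_condExp hm hX

theorem integral_cVar_le_variance (hm : m ≤ m₀) [IsProbabilityMeasure μ] (hX : MemLp X 2 μ) :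
    ∫ ω, cVar m μ X ω ∂μ ≤ Var[X; μ] := by
  linarith [integral_cVar_add_variance_condExp hm hX, variance_nonneg (μ[X | m]) μ]

end cVar

theorem sobol_total_robustness_general
    {Ω V : Type*} [MeasurableSpace Ω] [MeasurableSpace V]
    {μ : Measure Ω} [IsProbabilityMeasure μ]
    (Xv : Ω → V)
    (hXv : Measurable Xv)
    (f q : Ω → ℝ)
    (hfL2 : MemLp f 2 μ) (hqL2 : MemLp q 2 μ)
    (ε₁ ε₂ : ℝ)
    (h1 : ∫ ω, |cVar (MeasurableSpace.comap Xv inferInstance) μ f ω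
        - cVar (MeasurableSpace.comap Xv inferInstance) μ q ω| ∂μ < ε₁)
    (h2 : |variance f μ - variance q μ| < ε₂)
    (h3 : variance f μ = 1) :
    |(∫ ω, cVar (MeasurableSpace.comap Xv inferInstance) μ f ω ∂μ) / variance f μ
      - (∫ ω, cVar (MeasurableSpace.comap Xv inferInstance) μ q ω ∂μ) / variance q μ|
      < ε₁ + ε₂ := by
  set m : MeasurableSpace Ω := MeasurableSpace.comap Xv inferInstance
  have hm : m ≤ _ := hXv.comap_le
  have hclose : |(∫ ω, cVar m μ f ω ∂μ) - ∫ ω, cVar m μ q ω ∂μ| < ε₁ := by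
    rw [← integral_sub (integrable_cVar hm hfL2) (integrable_cVar hm hqL2)]
    exact abs_integral_le_integral_abs.trans_lt h1
  rw [h3] at h2 ⊢
  rw [div_one]
  exact abs_sub_div_lt_add hclose h2 (integral_cVar_nonneg hm hqL2)
    (integral_cVar_le_variance hm hqL2)

/-- **Robustness of grouped total Sobol' indices to the MFU parametrization**
(Proposition 3.2).  If the conditional variances given the shared parameters `X_v` are
`ε₁`-close in `L¹` and the total variances are `ε₂`-close, with `Var f = 1`, then the grouped
total Sobol' indices of the two MFU groups differ by less than `ε₁ + ε₂`. -/
theorem sobol_total_robustness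
    {Ω U V U' : Type*} [MeasurableSpace Ω] [MeasurableSpace U] [MeasurableSpace V]
    [MeasurableSpace U'] {μ : Measure Ω} [IsProbabilityMeasure μ]
    (Xu : Ω → U) (Xv : Ω → V) (Xu' : Ω → U')
    (hXu : Measurable Xu) (hXv : Measurable Xv) (hXu' : Measurable Xu')
    (hUV : IndepFun Xu Xv μ) (hU'V : IndepFun Xu' Xv μ)
    (F : U × V → ℝ) (Q : U' × V → ℝ) (hF : Measurable F) (hQ : Measurable Q)
    (f q : Ω → ℝ)
    (hf : f = fun ω => F (Xu ω, Xv ω)) (hq : q = fun ω => Q (Xu' ω, Xv ω))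
    (hfL2 : MemLp f 2 μ) (hqL2 : MemLp q 2 μ)
    (ε₁ ε₂ : ℝ) (hε₁ : 0 < ε₁) (hε₂ : 0 < ε₂)
    (h1 : ∫ ω, |cVar (MeasurableSpace.comap Xv inferInstance) μ f ω
        - cVar (MeasurableSpace.comap Xv inferInstance) μ q ω| ∂μ < ε₁)
    (h2 : |variance f μ - variance q μ| < ε₂)
    (h3 : variance f μ = 1) (h4 : 0 < variance q μ) :
    |(∫ ω, cVar (MeasurableSpace.comap Xv inferInstance) μ f ω ∂μ) / variance f μ
      - (∫ ω, cVar (MeasurableSpace.comap Xv inferInstance) μ q ω ∂μ) / variance q μ|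
      < ε₁ + ε₂ :=
  sobol_total_robustness_general Xv hXv f q hfL2 hqL2 ε₁ ε₂ h1 h2 h3
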